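/- arXiv:1710.08672 — 4 statements merged into one kernel-verified Lean document; each statement's English description precedes it below -/
import Mathlib

section
/- If $M$ is an $N\times N$ Manin matrix (i.e., entries in each column commute among themselves, and $[M_{ij},M_{kl}] = [M_{kj},M_{il}]$ for all $i,j,k,l$) with entries in an associative algebra, then exchanging any two columns of $M$ changes the column-ordered determinant $\mathrm{cdet}\, M$ by a sign. -/
/-- The column-ordered determinant of a square matrix with entries in a possibly
noncommutative ring: entries are multiplied left-to-right in column order. -/
def cdet {A : Type*} [Ring A] {n : ℕ} (M : Matrix (Fin n) (Fin n) A) : A :=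
  ∑ σ : Equiv.Perm (Fin n), ((Equiv.Perm.sign σ : ℤ) • (List.ofFn fun j => M (σ j) j).prod)

/-- A Manin matrix: entries of a common column commute, and cross-commutators
of `2 × 2` submatrices agree. -/
def IsManin {A : Type*} [Ring A] {m n : Type*} (M : Matrix m n A) : Prop :=
  (∀ i k j, Commute (M i j) (M k j)) ∧
  (∀ i k j l, M i j * M k l - M k l * M i j = M k j * M i l - M i l * M k j)

/-!
Pair each permutation `σ` with `σ * swap k (k+1)`. The terms of `cdet M` and of `cdet` of `M`
with columns `k, k+1` exchanged differ only in the two adjacent factors, so their sum collects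
the commutators `[M (σ k) k, M (σ (k+1)) (k+1)]`; the Manin cross relation identifies this with
the commutator belonging to the partner permutation, which carries the opposite sign, so everything
cancels. Since column permutations preserve the Manin property and adjacent transpositions
generate the symmetric group, `cdet (M.submatrix id τ) = sign τ • cdet M` for every `τ`.
-/

open Equiv List Finset Equiv.Perm

namespace List

theorem take_ofFn_congr {α : Type*} {n k : ℕ} {f g : Fin n → α}
    (h : ∀ t : Fin n, (t : ℕ) < k → f t = g t) : (ofFn f).take k = (ofFn g).take k := by
  apply ext_getElem (by simp)
  intro t ht _
  simp only [List.getElem_take, List.getElem_ofFn]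
  exact h _ (lt_min_iff.mp (by simpa using ht)).1

theorem drop_ofFn_congr {α : Type*} {n k : ℕ} {f g : Fin n → α}
    (h : ∀ t : Fin n, k ≤ (t : ℕ) → f t = g t) : (ofFn f).drop k = (ofFn g).drop k := by
  apply ext_getElem (by simp)
  intro t _ _
  simp only [List.getElem_drop, List.getElem_ofFn]
  exact h _ (Nat.le_add_right k t)

theorem prod_ofFn_eq_take_mul_mul_drop {M : Type*} [Monoid M] {n : ℕ} (f : Fin (n + 1) → M)
    (k : Fin n) :
    (ofFn f).prod =
      ((ofFn f).take k).prod * (f k.castSucc * f k.succ) * ((ofFn f).drop (k + 2)).prod := by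
  have hk : (k : ℕ) + 1 < (ofFn f).length := by simp
  rw [← prod_take_mul_prod_drop (ofFn f) k, drop_eq_getElem_cons (by omega),
    drop_eq_getElem_cons hk, List.getElem_ofFn, List.getElem_ofFn]
  simp only [prod_cons, mul_assoc]
  rfl

theorem prod_ofFn_sub_prod_ofFn {R : Type*} [Ring R] {n : ℕ} {f g : Fin (n + 1) → R} (k : Fin n)
    (hfg : ∀ t : Fin (n + 1), (t : ℕ) ≠ k → (t : ℕ) ≠ k + 1 → f t = g t) :
    (ofFn f).prod - (ofFn g).prod =
      ((ofFn f).take k).prod * (f k.castSucc * f k.succ - g k.castSucc * g k.succ) *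
        ((ofFn f).drop (k + 2)).prod := by
  have htake : (ofFn g).take k = (ofFn f).take k :=
    take_ofFn_congr fun t ht => (hfg t (by omega) (by omega)).symm
  have hdrop : (ofFn g).drop (k + 2) = (ofFn f).drop (k + 2) :=
    drop_ofFn_congr fun t ht => (hfg t (by omega) (by omega)).symm
  rw [prod_ofFn_eq_take_mul_mul_drop f k, prod_ofFn_eq_take_mul_mul_drop g k, htake, hdrop,
    mul_sub, sub_mul]

end List

theorem Equiv.Perm.sum_sign_smul_eq_zero_of_mul_swap {α G : Type*} [Fintype α] [DecidableEq α]
    [AddCommGroup G] {g : Perm α → G} {a b : α} (hab : a ≠ b)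
    (hg : ∀ σ, g (σ * swap a b) = g σ) : ∑ σ, (sign σ : ℤ) • g σ = 0 :=
  sum_involution (fun σ _ => σ * swap a b)
    (fun σ _ => by simp [hg, sign_swap hab])
    (fun σ _ _ => (not_congr mul_swap_eq_iff).mpr hab) (fun _ _ => mem_univ _)
    fun σ _ => mul_swap_involutive a b σ

theorem IsManin.submatrix {A : Type*} [Ring A] {m n m' n' : Type*} {M : Matrix m n A}
    (hM : IsManin M) (e : m' → m) (f : n' → n) : IsManin (M.submatrix e f) :=
  ⟨fun i k j => hM.1 (e i) (e k) (f j), fun i k j l => hM.2 (e i) (e k) (f j) (f l)⟩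

theorem cdet_submatrix_swap_castSucc_succ {A : Type*} [Ring A] {n : ℕ}
    {M : Matrix (Fin (n + 1)) (Fin (n + 1)) A} (hM : IsManin M) (k : Fin n) :
    cdet (M.submatrix id (swap k.castSucc k.succ)) = -cdet M := by
  set a := k.castSucc
  set b := k.succ
  set s := swap a b
  have hab : a ≠ b := Fin.castSucc_lt_succ.ne
  let F : Perm (Fin (n + 1)) → Fin (n + 1) → A := fun σ t => M (σ t) t
  have hsign : ∀ σ : Perm (Fin (n + 1)), (sign (σ * s) : ℤ) = -sign σ := by
    simp [s, sign_swap hab]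
  have hreindex :
      cdet (M.submatrix id s) = -∑ σ, (sign σ : ℤ) • (ofFn (F σ ∘ s)).prod := by
    rw [cdet, ← sum_neg_distrib]
    refine Fintype.sum_equiv (Equiv.mulRight s) _ _ fun σ => ?_
    rw [Equiv.coe_mulRight, hsign, neg_smul, neg_neg]
    congr 3 with t
    simp [F, s]
  have hfix : ∀ t : Fin (n + 1), (t : ℕ) ≠ k → (t : ℕ) ≠ k + 1 → s t = t :=
    fun t h₁ h₂ =>
      swap_apply_of_ne_of_ne (fun h => h₁ (by simp [h, a])) (fun h => h₂ (by simp [h, b]))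
  have hframe :
      ∀ σ (t : Fin (n + 1)), (t : ℕ) ≠ k → (t : ℕ) ≠ k + 1 → F σ t = (F σ ∘ s) t :=
    fun σ t h₁ h₂ => by simp [F, hfix t h₁ h₂]
  have hpair : ∀ σ, (ofFn (F (σ * s))).prod - (ofFn (F (σ * s) ∘ s)).prod =
      (ofFn (F σ)).prod - (ofFn (F σ ∘ s)).prod := fun σ => by
    rw [prod_ofFn_sub_prod_ofFn k (hframe _), prod_ofFn_sub_prod_ofFn k (hframe _),
      take_ofFn_congr (g := F σ) fun t _ => by simp [F, hfix t (by omega) (by omega)],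
      drop_ofFn_congr (g := F σ) fun t _ => by simp [F, hfix t (by omega) (by omega)]]
    simp only [F, Function.comp_apply, Perm.mul_apply, s, a, b, swap_apply_left, swap_apply_right]
    rw [hM.2 (σ k.castSucc) (σ k.succ) k.castSucc k.succ]
  calc cdet (M.submatrix id s)
      = cdet (M.submatrix id s) + cdet M - cdet M := (add_sub_cancel_right _ _).symm
    _ = ∑ σ, (sign σ : ℤ) • ((ofFn (F σ)).prod - (ofFn (F σ ∘ s)).prod) - cdet M := by
      rw [hreindex, cdet]
      simp only [smul_sub, sum_sub_distrib, F]
      abel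
    _ = -cdet M := by rw [sum_sign_smul_eq_zero_of_mul_swap hab hpair, zero_sub]

theorem cdet_submatrix_perm {A : Type*} [Ring A] {N : ℕ} {M : Matrix (Fin N) (Fin N) A}
    (hM : IsManin M) (τ : Perm (Fin N)) :
    cdet (M.submatrix id τ) = (sign τ : ℤ) • cdet M := by
  obtain _ | n := N
  · simp [Subsingleton.elim τ 1]
  have hτ : τ ∈ Submonoid.closure (Set.range fun k : Fin n => swap k.castSucc k.succ) := by
    simp [mclosure_swap_castSucc_succ]
  refine Submonoid.closure_induction (motive := fun (τ : Perm (Fin (n + 1))) _ =>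
    ∀ M : Matrix (Fin (n + 1)) (Fin (n + 1)) A,
      IsManin M → cdet (M.submatrix id τ) = (sign τ : ℤ) • cdet M) ?_ ?_ ?_ hτ M hM
  · rintro _ ⟨k, rfl⟩ M hM
    simp [cdet_submatrix_swap_castSucc_succ hM, sign_swap Fin.castSucc_lt_succ.ne]
  · intro M _
    simp
  · intro σ τ _ _ hσ hτ M hM
    rw [Perm.coe_mul, ← Function.id_comp id, ← Matrix.submatrix_submatrix,
      hτ _ (hM.submatrix id σ), hσ M hM, Perm.sign_mul, Units.val_mul, mul_comm, mul_smul]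

/-- Exchanging two columns of a Manin matrix changes the column-ordered
determinant by a sign. -/
theorem stmt4 {A : Type*} [Ring A] {N : ℕ} (M : Matrix (Fin N) (Fin N) A)
    (hM : IsManin M) (i j : Fin N) (hij : i ≠ j) :
    cdet (M.submatrix id (Equiv.swap i j)) = - cdet M := by
  simp [cdet_submatrix_perm hM, sign_swap hij]
end

section
/- Let $M = \begin{pmatrix} A & B \\ C & D \end{pmatrix}$ be the block form of an $N\times N$ Manin matrix with entries in an associative algebra $\mathcal{A}$, and suppose $\mathcal{A}$ embeds in a larger algebra $\mathcal{A}'$ in which the block $A$ has a right inverse $A^{-1}$. Then $\mathrm{cdet}\, M = \mathrm{cdet}(A)\cdot\mathrm{cdet}(D - C A^{-1} B)$, as an identity in $\mathcal{A}$. -/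
/-!
Encode the columns of a matrix `M` as odd elements `φ j = ∑ i, M i j ⊗ eᵢ` of `R ⊗ Λ(ℤᴺ)`; then
`φ 1 ⋯ φ N = cdet M ⊗ (e₁ ∧ ⋯ ∧ e_N)` for every matrix, and the Manin relations say exactly that
the `φ j` anticommute and square to zero. Consequently, behind the first `k` columns one may
subtract from each later column a right combination `∑ c, φ c * x c j` of them without changing
the product. For `x = A⁻¹ B` the later columns become those of `0` stacked over the Schur
complement `D - C A⁻¹ B`, whose product is `cdet (D - C A⁻¹ B) ⊗ (e_{k+1} ∧ ⋯ ∧ e_{k+l})`; this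
wedge kills every `e_{k+i}` coming from the first `k` columns, which thus only contribute `cdet A`.
-/

open scoped TensorProduct

theorem List.prod_ofFn_sum {R ι : Type*} [Semiring R] [Fintype ι] [DecidableEq ι] :
    ∀ {n : ℕ} (F : ι → Fin n → R),
      (List.ofFn fun j => ∑ i, F i j).prod = ∑ g : Fin n → ι, (List.ofFn fun j => F (g j) j).prod
  | 0, _ => by simp
  | n + 1, F => by
    rw [List.ofFn_succ, List.prod_cons, List.prod_ofFn_sum (fun i j => F i j.succ),
      Finset.sum_mul_sum, ← (Fin.consEquiv fun _ => ι).sum_comp, Fintype.sum_prod_type]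
    simp [Fin.consEquiv, List.ofFn_succ]

theorem Algebra.TensorProduct.prod_ofFn_tmul {R A B : Type*} [CommSemiring R] [Semiring A]
    [Algebra R A] [Semiring B] [Algebra R B] :
    ∀ {n : ℕ} (a : Fin n → A) (b : Fin n → B),
      (List.ofFn fun j => a j ⊗ₜ[R] b j).prod = (List.ofFn a).prod ⊗ₜ (List.ofFn b).prod
  | 0, _, _ => rfl
  | n + 1, a, b => by
    simp only [List.ofFn_succ, List.prod_cons, prod_ofFn_tmul fun j => a j.succ,
      Algebra.TensorProduct.tmul_mul_tmul]

namespace Grassmann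

section AnticommutingFamily

variable {R ι : Type*} [Ring R] {φ : ι → R}

theorem list_prod_map_mul_eq_neg_one_pow_smul (hanti : ∀ a b, φ a * φ b + φ b * φ a = 0)
    (c : ι) (s : List ι) :
    (s.map φ).prod * φ c = (-1 : ℤ) ^ s.length • (φ c * (s.map φ).prod) := by
  induction s with
  | nil => simp
  | cons a t ih =>
    have hac : φ a * φ c = -(φ c * φ a) := eq_neg_of_add_eq_zero_left (hanti a c)
    rw [List.map_cons, List.prod_cons, mul_assoc, ih, mul_smul_comm, ← mul_assoc, hac, neg_mul,
      List.length_cons, pow_succ, mul_smul, neg_one_smul, mul_assoc (φ c)]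

theorem list_prod_map_mul_eq_zero_of_mem (hanti : ∀ a b, φ a * φ b + φ b * φ a = 0)
    (hsq : ∀ a, φ a * φ a = 0) {c : ι} {s : List ι} (hc : c ∈ s) :
    (s.map φ).prod * φ c = 0 := by
  induction s with
  | nil => simp at hc
  | cons a t ih =>
    rw [List.map_cons, List.prod_cons, mul_assoc]
    rcases List.mem_cons.mp hc with rfl | hc
    · rw [list_prod_map_mul_eq_neg_one_pow_smul hanti, mul_smul_comm, ← mul_assoc, hsq,
        zero_mul, smul_zero]
    · rw [ih hc, mul_zero]

theorem list_prod_map_mul_ofFn_sub (hanti : ∀ a b, φ a * φ b + φ b * φ a = 0)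
    (hsq : ∀ a, φ a * φ a = 0) {κ : Type*} [Fintype κ] (c : κ → ι) :
    ∀ {n : ℕ} (m : Fin n → ι) (x : κ → Fin n → R) (s : List ι), (∀ i, c i ∈ s) →
      (s.map φ).prod * (List.ofFn fun j => φ (m j) - ∑ i, φ (c i) * x i j).prod
        = (s.map φ).prod * (List.ofFn fun j => φ (m j)).prod
  | 0, _, _, _, _ => rfl
  | n + 1, m, x, s, hs => by
    have hkill : (s.map φ).prod * ∑ i, φ (c i) * x i 0 = 0 := by
      simp only [Finset.mul_sum, ← mul_assoc,
        list_prod_map_mul_eq_zero_of_mem hanti hsq (hs _), zero_mul, Finset.sum_const_zero]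
    have ih := list_prod_map_mul_ofFn_sub hanti hsq c (fun j => m j.succ) (fun i j => x i j.succ)
      (s ++ [m 0]) fun i => List.mem_append_left _ (hs i)
    simp only [List.map_append, List.map_singleton, List.prod_append, List.prod_singleton] at ih
    rw [List.ofFn_succ, List.ofFn_succ, List.prod_cons, List.prod_cons, ← mul_assoc,
      mul_sub, hkill, sub_zero, ih, mul_assoc]

end AnticommutingFamily

variable {N : ℕ}

noncomputable def gen (i : Fin N) : ExteriorAlgebra ℤ (Fin N → ℤ) :=
  ExteriorAlgebra.ι ℤ (Pi.basisFun ℤ (Fin N) i)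

noncomputable def wedge {n : ℕ} (w : Fin n → Fin N) : ExteriorAlgebra ℤ (Fin N → ℤ) :=
  ExteriorAlgebra.ιMulti ℤ n fun j => Pi.basisFun ℤ (Fin N) (w j)

theorem wedge_eq_prod {n : ℕ} (w : Fin n → Fin N) :
    wedge w = (List.ofFn fun j => gen (w j)).prod :=
  ExteriorAlgebra.ιMulti_apply _

theorem gen_mul_gen_add_swap (i j : Fin N) : gen i * gen j + gen j * gen i = 0 :=
  ExteriorAlgebra.ι_add_mul_swap _ _

theorem gen_mul_self (i : Fin N) : gen i * gen i = 0 :=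
  ExteriorAlgebra.ι_sq_zero _

theorem wedge_eq_zero_of_not_injective {n : ℕ} {w : Fin n → Fin N}
    (hw : ¬ Function.Injective w) : wedge w = 0 :=
  AlternatingMap.map_eq_zero_of_not_injective _ _ fun h => hw fun _ _ hab =>
    h (congrArg (Pi.basisFun ℤ (Fin N)) hab)

theorem wedge_comp_perm {n : ℕ} (w : Fin n → Fin N) (σ : Equiv.Perm (Fin n)) :
    wedge (w ∘ σ) = (Equiv.Perm.sign σ : ℤ) • wedge w :=
  (AlternatingMap.map_perm _ (fun j => Pi.basisFun ℤ (Fin N) (w j)) σ).trans (Units.smul_def _ _)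

theorem wedge_mul_wedge {k l : ℕ} (u : Fin k → Fin N) (v : Fin l → Fin N) :
    wedge u * wedge v = wedge (Fin.append u v) := by
  rw [wedge_eq_prod, wedge_eq_prod, wedge_eq_prod, ← List.prod_append, ← List.ofFn_fin_append]
  congr 2
  funext p
  refine Fin.addCases (fun i => ?_) (fun i => ?_) p <;> simp

noncomputable def topCoeff : ExteriorAlgebra ℤ (Fin N → ℤ) →ₗ[ℤ] ℤ :=
  ExteriorAlgebra.liftAlternating (Pi.single N (Pi.basisFun ℤ (Fin N)).det)

theorem topCoeff_wedge_id : topCoeff (wedge (id : Fin N → Fin N)) = 1 := by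
  rw [topCoeff, wedge, ExteriorAlgebra.liftAlternating_apply_ιMulti, Pi.single_eq_same]
  exact (Pi.basisFun ℤ (Fin N)).det_self

theorem tmul_wedge_id_injective {R : Type*} [Ring R] :
    Function.Injective fun a : R => a ⊗ₜ[ℤ] wedge (id : Fin N → Fin N) := by
  intro a b h
  simpa [topCoeff_wedge_id] using
    congrArg (fun z => TensorProduct.rid ℤ R (topCoeff.lTensor R z)) h

variable {R : Type*} [Ring R]

noncomputable def colVec {m n : ℕ} (M : Matrix (Fin m) (Fin n) R) (r : Fin m → Fin N)
    (j : Fin n) : R ⊗[ℤ] ExteriorAlgebra ℤ (Fin N → ℤ) :=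
  ∑ i, M i j ⊗ₜ gen (r i)

theorem prod_colVec {m n : ℕ} (M : Matrix (Fin m) (Fin n) R) (r : Fin m → Fin N) :
    (List.ofFn (colVec M r)).prod
      = ∑ g : Fin n → Fin m, (List.ofFn fun j => M (g j) j).prod ⊗ₜ wedge (r ∘ g) := by
  rw [show colVec M r = fun j => ∑ i, M i j ⊗ₜ gen (r i) from rfl, List.prod_ofFn_sum]
  simp only [Algebra.TensorProduct.prod_ofFn_tmul, wedge_eq_prod, Function.comp_apply]

theorem prod_colVec_eq_cdet_tmul {n : ℕ} (M : Matrix (Fin n) (Fin n) R) (r : Fin n → Fin N) :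
    (List.ofFn (colVec M r)).prod = cdet M ⊗ₜ wedge r := by
  rw [prod_colVec, cdet, TensorProduct.sum_tmul]
  refine (Fintype.sum_of_injective (fun σ : Equiv.Perm (Fin n) => ⇑σ) DFunLike.coe_injective _ _
    (fun g hg => ?_) fun σ => ?_).symm
  · have hg : ¬ Function.Injective g := fun hinj =>
      hg ⟨Equiv.ofBijective g (Finite.injective_iff_bijective.mp hinj), rfl⟩
    rw [wedge_eq_zero_of_not_injective fun h => hg (h.of_comp), TensorProduct.tmul_zero]
  · rw [wedge_comp_perm, TensorProduct.smul_tmul]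

theorem colVec_mul_colVec {m n : ℕ} (M : Matrix (Fin m) (Fin n) R) (r : Fin m → Fin N)
    (a b : Fin n) :
    colVec M r a * colVec M r b = ∑ p, ∑ q, (M p a * M q b) ⊗ₜ (gen (r p) * gen (r q)) := by
  simp only [colVec, Finset.sum_mul_sum, Algebra.TensorProduct.tmul_mul_tmul]

theorem sum_sum_tmul_gen_mul_gen_eq_zero {m : ℕ} (r : Fin m → Fin N) (F : Fin m → Fin m → R)
    (hF : ∀ p q, F p q = F q p) :
    ∑ p, ∑ q, F p q ⊗ₜ[ℤ] (gen (r p) * gen (r q)) = 0 := by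
  rw [← Finset.sum_product', Finset.univ_product_univ]
  refine Finset.sum_ninvolution Prod.swap (fun ⟨p, q⟩ => ?_) (fun ⟨p, q⟩ hne hswap => ?_)
    (fun _ => Finset.mem_univ _) Prod.swap_swap
  · rw [Prod.fst_swap, Prod.snd_swap, hF q p, ← TensorProduct.tmul_add, gen_mul_gen_add_swap,
      TensorProduct.tmul_zero]
  · obtain rfl : q = p := congrArg Prod.fst hswap
    rw [gen_mul_self, TensorProduct.tmul_zero] at hne
    exact hne rfl

theorem IsManin.colVec_mul_colVec_add_swap {m n : ℕ} {M : Matrix (Fin m) (Fin n) R}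
    (hM : IsManin M) (r : Fin m → Fin N) (a b : Fin n) :
    colVec M r a * colVec M r b + colVec M r b * colVec M r a = 0 := by
  simp only [colVec_mul_colVec, ← Finset.sum_add_distrib, ← TensorProduct.add_tmul]
  exact sum_sum_tmul_gen_mul_gen_eq_zero r _ fun p q =>
    sub_eq_sub_iff_add_eq_add.mp (hM.2 p q a b)

theorem IsManin.colVec_mul_self {m n : ℕ} {M : Matrix (Fin m) (Fin n) R}
    (hM : IsManin M) (r : Fin m → Fin N) (a : Fin n) : colVec M r a * colVec M r a = 0 := by
  rw [colVec_mul_colVec]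
  exact sum_sum_tmul_gen_mul_gen_eq_zero r _ fun p q => (hM.1 p q a).eq

theorem exists_perm_of_injective_append {k l : ℕ} {g : Fin k → Fin (k + l)}
    (hg : Function.Injective (Fin.append g (Fin.natAdd k))) :
    ∃ σ : Equiv.Perm (Fin k), (fun j => Fin.castAdd l (σ j)) = g := by
  have hcast : ∀ j, ∃ i, Fin.castAdd l i = g j := by
    intro j
    induction h : g j using Fin.addCases with
    | left i => exact ⟨i, rfl⟩
    | right i =>
      have := congrArg Fin.val (@hg (Fin.castAdd l j) (Fin.natAdd k i) (by simp [h]))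
      simp only [Fin.val_castAdd, Fin.val_natAdd] at this
      omega
  choose g' hg' using hcast
  have hinj : Function.Injective g' := fun a b hab => by
    simpa using @hg (Fin.castAdd l a) (Fin.castAdd l b) (by simp [← hg', hab])
  exact ⟨Equiv.ofBijective g' (Finite.injective_iff_bijective.mp hinj), funext hg'⟩

theorem wedge_append_castAdd_perm {k l : ℕ} (σ : Equiv.Perm (Fin k)) :
    wedge (Fin.append (fun j => Fin.castAdd l (σ j)) (Fin.natAdd k))
      = (Equiv.Perm.sign σ : ℤ) • wedge (id : Fin (k + l) → Fin (k + l)) := by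
  have h : Fin.append (fun j => Fin.castAdd l (σ j)) (Fin.natAdd k)
      = id ∘ finSumFinEquiv.permCongr (σ.sumCongr (Equiv.refl (Fin l))) := by
    funext p
    refine Fin.addCases (fun i => ?_) (fun i => ?_) p <;> simp [Equiv.permCongr_apply]
  rw [h, wedge_comp_perm, Equiv.Perm.sign_permCongr, Equiv.Perm.sign_sumCongr,
    Equiv.Perm.sign_refl, mul_one]

theorem prod_colVec_mul_tmul_wedge_natAdd {k l : ℕ} (T : Matrix (Fin (k + l)) (Fin k) R)
    (s : R) :
    (List.ofFn (colVec T id)).prod * (s ⊗ₜ wedge (Fin.natAdd k : Fin l → Fin (k + l)))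
      = (cdet (T.submatrix (Fin.castAdd l) id) * s) ⊗ₜ wedge (id : Fin (k + l) → Fin (k + l)) := by
  simp only [prod_colVec, Finset.sum_mul, Algebra.TensorProduct.tmul_mul_tmul, wedge_mul_wedge,
    Function.id_comp, cdet, TensorProduct.sum_tmul]
  refine (Fintype.sum_of_injective (fun (σ : Equiv.Perm (Fin k)) j => Fin.castAdd l (σ j))
    (fun σ τ h => Equiv.ext fun j => Fin.castAdd_injective _ _ (congrFun h j)) _ _
    (fun g hg => ?_) fun σ => ?_).symm
  · rw [wedge_eq_zero_of_not_injective (mt exists_perm_of_injective_append hg),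
      TensorProduct.tmul_zero]
  · rw [wedge_append_castAdd_perm, ← TensorProduct.smul_tmul, smul_mul_assoc]
    rfl

variable {k l : ℕ} (A : Matrix (Fin k) (Fin k) R) (B : Matrix (Fin k) (Fin l) R)
  (C : Matrix (Fin l) (Fin k) R) (D : Matrix (Fin l) (Fin l) R)

theorem colVec_natAdd_sub_eq_schur {Ainv : Matrix (Fin k) (Fin k) R} (hA : A * Ainv = 1)
    (j : Fin l) :
    colVec ((Matrix.fromBlocks A B C D).submatrix finSumFinEquiv.symm finSumFinEquiv.symm) id
        (Fin.natAdd k j)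
      - ∑ c, colVec ((Matrix.fromBlocks A B C D).submatrix finSumFinEquiv.symm
          finSumFinEquiv.symm) id (Fin.castAdd l c) * ((Ainv * B) c j ⊗ₜ 1)
      = colVec (D - C * Ainv * B) (Fin.natAdd k) j := by
  have htop : ∀ i, B i j - ∑ c, A i c * (Ainv * B) c j = 0 := fun i => by
    rw [← Matrix.mul_apply, ← Matrix.mul_assoc, hA, Matrix.one_mul, sub_self]
  have hbot : ∀ i, D i j - ∑ c, C i c * (Ainv * B) c j = (D - C * Ainv * B) i j := fun i => by
    rw [← Matrix.mul_apply, Matrix.mul_assoc C, Matrix.sub_apply]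
  simp only [colVec, Finset.sum_mul, Algebra.TensorProduct.tmul_mul_tmul, mul_one]
  rw [Finset.sum_comm, ← Finset.sum_sub_distrib]
  simp only [← TensorProduct.sum_tmul, ← TensorProduct.sub_tmul, Fin.sum_univ_add]
  simp [htop, hbot]

theorem cdet_fromBlocks_eq_cdet_mul_cdet_schur
    (hM : IsManin ((Matrix.fromBlocks A B C D).submatrix finSumFinEquiv.symm finSumFinEquiv.symm))
    {Ainv : Matrix (Fin k) (Fin k) R} (hA : A * Ainv = 1) :
    cdet ((Matrix.fromBlocks A B C D).submatrix finSumFinEquiv.symm finSumFinEquiv.symm)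
      = cdet A * cdet (D - C * Ainv * B) := by
  set M := (Matrix.fromBlocks A B C D).submatrix finSumFinEquiv.symm finSumFinEquiv.symm
  set φ := colVec M id
  set left := (List.ofFn fun j => φ (Fin.castAdd l j)).prod
  have hleft : left = ((List.ofFn (Fin.castAdd l)).map φ).prod := by rw [List.map_ofFn]; rfl
  have hAblock : (M.submatrix id (Fin.castAdd l)).submatrix (Fin.castAdd l) id = A := by
    ext i j; simp [M]
  apply tmul_wedge_id_injective (N := k + l)
  calc cdet M ⊗ₜ wedge id
      = left * (List.ofFn fun j => φ (Fin.natAdd k j)).prod := by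
        rw [← prod_colVec_eq_cdet_tmul, List.ofFn_add, List.prod_append]; rfl
    _ = left * (List.ofFn fun j =>
          φ (Fin.natAdd k j) - ∑ c, φ (Fin.castAdd l c) * ((Ainv * B) c j ⊗ₜ 1)).prod := by
        rw [hleft, list_prod_map_mul_ofFn_sub (IsManin.colVec_mul_colVec_add_swap hM id)
          (IsManin.colVec_mul_self hM id) _ _ _ _ fun c => List.mem_ofFn.mpr ⟨c, rfl⟩]
    _ = left * (cdet (D - C * Ainv * B) ⊗ₜ wedge (Fin.natAdd k)) := by
        simp only [φ, M, colVec_natAdd_sub_eq_schur A B C D hA, ← prod_colVec_eq_cdet_tmul]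
    _ = (cdet A * cdet (D - C * Ainv * B)) ⊗ₜ wedge id := by
        rw [← hAblock]
        exact prod_colVec_mul_tmul_wedge_natAdd (M.submatrix id (Fin.castAdd l)) _

end Grassmann

theorem IsManin.map {R S : Type*} [Ring R] [Ring S] {m n : Type*} {M : Matrix m n R}
    (hM : IsManin M) (f : R →+* S) : IsManin (M.map f) :=
  ⟨fun i k j => (hM.1 i k j).map f, fun i k j l => by
    simpa only [Matrix.map_apply, map_sub, map_mul] using congrArg f (hM.2 i k j l)⟩

theorem cdet_map {R S : Type*} [Ring R] [Ring S] (f : R →+* S) {n : ℕ}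
    (M : Matrix (Fin n) (Fin n) R) : cdet (M.map f) = f (cdet M) := by
  simp only [cdet, map_sum, map_zsmul, map_list_prod, List.map_ofFn]
  rfl

theorem stmt6_general {A A' : Type*} [Ring A] [Ring A'] (f : A →+* A')
    (k l : ℕ)
    (Ablk : Matrix (Fin k) (Fin k) A) (B : Matrix (Fin k) (Fin l) A)
    (C : Matrix (Fin l) (Fin k) A) (D : Matrix (Fin l) (Fin l) A)
    (hM : IsManin ((Matrix.fromBlocks Ablk B C D).submatrix
      finSumFinEquiv.symm finSumFinEquiv.symm))
    (Ainv : Matrix (Fin k) (Fin k) A') (hAinv : Ablk.map f * Ainv = 1) :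
    f (cdet ((Matrix.fromBlocks Ablk B C D).submatrix
        finSumFinEquiv.symm finSumFinEquiv.symm)) =
      cdet (Ablk.map f) * cdet (D.map f - C.map f * Ainv * B.map f) := by
  have hmap : ((Matrix.fromBlocks Ablk B C D).submatrix
        finSumFinEquiv.symm finSumFinEquiv.symm).map f
      = (Matrix.fromBlocks (Ablk.map f) (B.map f) (C.map f) (D.map f)).submatrix
          finSumFinEquiv.symm finSumFinEquiv.symm := by
    rw [← Matrix.submatrix_map, ← Matrix.fromBlocks_map]
  rw [← cdet_map, hmap]
  exact Grassmann.cdet_fromBlocks_eq_cdet_mul_cdet_schur _ _ _ _ (hmap ▸ hM.map f) hAinv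

/-- Schur complement formula for the column-ordered determinant of a Manin matrix,
when the top-left block has a right inverse in an overalgebra `A'` into which the
base algebra embeds. -/
theorem stmt6 {A A' : Type*} [Ring A] [Ring A'] (f : A →+* A')
    (hf : Function.Injective f) (k l : ℕ)
    (Ablk : Matrix (Fin k) (Fin k) A) (B : Matrix (Fin k) (Fin l) A)
    (C : Matrix (Fin l) (Fin k) A) (D : Matrix (Fin l) (Fin l) A)
    (hM : IsManin ((Matrix.fromBlocks Ablk B C D).submatrix
      finSumFinEquiv.symm finSumFinEquiv.symm))
    (Ainv : Matrix (Fin k) (Fin k) A') (hAinv : Ablk.map f * Ainv = 1) :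
    f (cdet ((Matrix.fromBlocks Ablk B C D).submatrix
        finSumFinEquiv.symm finSumFinEquiv.symm)) =
      cdet (Ablk.map f) * cdet (D.map f - C.map f * Ainv * B.map f) :=
  stmt6_general f k l Ablk B C D hM Ainv hAinv
end

section
/- Classical $(\mathfrak{gl}_M,\mathfrak{gl}_N)$-duality with regular singularities: in the commutative polynomial algebra $\mathbb{C}[x^a_i, p^a_i]$ ($1\le a\le M$, $1\le i\le N$), for distinct $z_1,\dots,z_N \in \mathbb{C}$ and distinct $\lambda_1,\dots,\lambda_M \in \mathbb{C}$, the following identity of polynomials in two variables $z,\lambda$ holds: $\prod_{i=1}^N (z - z_i)\cdot\det\Big(\big(\lambda - \lambda_a\big)\delta_{ab} - \sum_{i=1}^N \frac{x^a_i p^b_i}{z - z_i}\Big)_{a,b=1}^M = \prod_{a=1}^M (\lambda - \lambda_a)\cdot\det\Big(\big(z - z_i\big)\delta_{ij} - \sum_{a=1}^M \frac{p^a_i x^a_j}{\lambda - \lambda_a}\Big)_{i,j=1}^N$. -/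
/-- The polynomial algebra `ℂ[x^a_i, p^a_i][z, λ]`: variables `(false, a, i) = x^a_i`,
`(true, a, i) = p^a_i`, `Sum.inr 0 = z`, `Sum.inr 1 = λ`. -/
abbrev R13 (M N : ℕ) : Type := MvPolynomial ((Bool × Fin M × Fin N) ⊕ Fin 2) ℂ

/-- Its field of fractions, in which the rational expressions below live. -/
abbrev K13 (M N : ℕ) : Type := FractionRing (R13 M N)

noncomputable def xv (M N : ℕ) (a : Fin M) (i : Fin N) : K13 M N :=
  algebraMap (R13 M N) (K13 M N) (MvPolynomial.X (Sum.inl (false, a, i)))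

noncomputable def pv (M N : ℕ) (a : Fin M) (i : Fin N) : K13 M N :=
  algebraMap (R13 M N) (K13 M N) (MvPolynomial.X (Sum.inl (true, a, i)))

noncomputable def zvar (M N : ℕ) : K13 M N :=
  algebraMap (R13 M N) (K13 M N) (MvPolynomial.X (Sum.inr 0))

noncomputable def lvar (M N : ℕ) : K13 M N :=
  algebraMap (R13 M N) (K13 M N) (MvPolynomial.X (Sum.inr 1))

/-- Embedding of complex constants. -/
noncomputable def cc (M N : ℕ) (w : ℂ) : K13 M N :=
  algebraMap (R13 M N) (K13 M N) (MvPolynomial.C w)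

/-!
Both sides are the determinant of the block matrix
`[[diag (λ - λ_a), X], [ᵗP, diag (z - z_i)]]` over the field of fractions, expanded through the
Schur complement of one or the other diagonal block.
-/

namespace Matrix

variable {m n : Type*} [Fintype n] [DecidableEq m] [DecidableEq n]

theorem diagonal_sub_mul_diagonal_inv_mul {K : Type*} [Field K] (d : m → K) (e : n → K)
    (X : Matrix m n K) (P : Matrix n m K) :
    diagonal d - X * diagonal e⁻¹ * P =
      of fun a b => d a * (if a = b then 1 else 0) - ∑ i, X a i * P i b / e i := by
  ext a b
  simp [diagonal_apply, mul_apply, div_eq_mul_inv, mul_right_comm]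

variable [Fintype m]

theorem det_mul_det_schur_comm {α : Type*} [CommRing α] (A : Matrix m m α) (B : Matrix m n α)
    (C : Matrix n m α) (D : Matrix n n α) [Invertible A] [Invertible D] :
    det D * det (A - B * ⅟D * C) = det A * det (D - C * ⅟A * B) :=
  (det_fromBlocks₂₂ A B C D).symm.trans (det_fromBlocks₁₁ A B C D)

theorem prod_mul_det_sub_sum_div_comm {K : Type*} [Field K] (d₁ : m → K) (d₂ : n → K)
    (X : Matrix m n K) (P : Matrix n m K) (hd₁ : ∀ a, d₁ a ≠ 0) (hd₂ : ∀ i, d₂ i ≠ 0) :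
    (∏ i, d₂ i) * (of fun a b => d₁ a * (if a = b then 1 else 0) - ∑ i, X a i * P i b / d₂ i).det =
      (∏ a, d₁ a) * (of fun i j => d₂ i * (if i = j then 1 else 0) - ∑ a, P i a * X a j / d₁ a).det := by
  let _ : Invertible d₁ := ⟨d₁⁻¹, funext fun a => inv_mul_cancel₀ (hd₁ a),
    funext fun a => mul_inv_cancel₀ (hd₁ a)⟩
  let _ : Invertible d₂ := ⟨d₂⁻¹, funext fun i => inv_mul_cancel₀ (hd₂ i),
    funext fun i => mul_inv_cancel₀ (hd₂ i)⟩
  let _ := diagonalInvertible d₁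
  let _ := diagonalInvertible d₂
  have h := det_mul_det_schur_comm (diagonal d₁) X P (diagonal d₂)
  rw [invOf_diagonal_eq, invOf_diagonal_eq, det_diagonal, det_diagonal] at h
  rwa [← diagonal_sub_mul_diagonal_inv_mul, ← diagonal_sub_mul_diagonal_inv_mul]

end Matrix

theorem MvPolynomial.X_sub_C_ne_zero {σ R : Type*} [CommRing R] [Nontrivial R] (s : σ) (w : R) :
    (MvPolynomial.X s - MvPolynomial.C w : MvPolynomial σ R) ≠ 0 := fun h => by
  simpa using congrArg (MvPolynomial.eval fun _ => w + 1) h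

theorem algebraMap_X_sub_cc_ne_zero (M N : ℕ) (s : (Bool × Fin M × Fin N) ⊕ Fin 2) (w : ℂ) :
    algebraMap (R13 M N) (K13 M N) (MvPolynomial.X s) - cc M N w ≠ 0 := by
  rw [cc, ← map_sub]
  exact (map_ne_zero_iff _ (IsFractionRing.injective _ _)).mpr (MvPolynomial.X_sub_C_ne_zero s w)

theorem stmt13_general (M N : ℕ) (zi : Fin N → ℂ) (la : Fin M → ℂ) :
    (∏ i, (zvar M N - cc M N (zi i))) *
      (Matrix.of fun a b : Fin M =>
        (lvar M N - cc M N (la a)) * (if a = b then 1 else 0) -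
          ∑ i, xv M N a i * pv M N b i / (zvar M N - cc M N (zi i))).det =
    (∏ a, (lvar M N - cc M N (la a))) *
      (Matrix.of fun i j : Fin N =>
        (zvar M N - cc M N (zi i)) * (if i = j then 1 else 0) -
          ∑ a, pv M N a i * xv M N a j / (lvar M N - cc M N (la a))).det :=
  Matrix.prod_mul_det_sub_sum_div_comm _ _ (fun a i => xv M N a i) (fun i a => pv M N a i)
    (fun a => algebraMap_X_sub_cc_ne_zero M N (Sum.inr 1) (la a))
    (fun i => algebraMap_X_sub_cc_ne_zero M N (Sum.inr 0) (zi i))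

/-- Classical `(𝔤𝔩_M, 𝔤𝔩_N)`-duality with regular singularities:
`∏_i (z - z_i) · det((λ - λ_a)δ_{ab} - ∑_i x^a_i p^b_i/(z - z_i))
 = ∏_a (λ - λ_a) · det((z - z_i)δ_{ij} - ∑_a p^a_i x^a_j/(λ - λ_a))`. -/
theorem stmt13 (M N : ℕ) (zi : Fin N → ℂ) (la : Fin M → ℂ)
    (hz : Function.Injective zi) (hl : Function.Injective la) :
    (∏ i, (zvar M N - cc M N (zi i))) *
      (Matrix.of fun a b : Fin M =>
        (lvar M N - cc M N (la a)) * (if a = b then 1 else 0) -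
          ∑ i, xv M N a i * pv M N b i / (zvar M N - cc M N (zi i))).det =
    (∏ a, (lvar M N - cc M N (la a))) *
      (Matrix.of fun i j : Fin N =>
        (zvar M N - cc M N (zi i)) * (if i = j then 1 else 0) -
          ∑ a, pv M N a i * xv M N a j / (lvar M N - cc M N (la a))).det :=
  stmt13_general M N zi la
end

section
/- Quantum $(\mathfrak{gl}_M,\mathfrak{gl}_N)$-duality, simplest case: let $\mathcal{U}$ be the Weyl algebra on $x^a_i, \partial^a_i$ ($1\le a\le M$, $1\le i\le N$). Fix distinct $z_1,\dots,z_N$ and distinct $\lambda_1,\dots,\lambda_M$ in $\mathbb{C}$, and form the $(M+N)\times(M+N)$ matrix $\mathcal{M} = \begin{pmatrix} \mathrm{diag}(\partial_z - \lambda_a)_{a=1}^M & X \\ {}^tD & \mathrm{diag}(z - z_i)_{i=1}^N \end{pmatrix}$ with entries in $\mathcal{U}[z,\partial_z]$, where $X = (x^a_i)$ and $D = (\partial^a_i)$. Then $\mathcal{M}$ is a Manin matrix. -/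
/-- Polynomials in the variables `x^a_i` (`some (a,i)`) and `z` (`none`); the algebra
`𝒰[z, ∂_z]` is realised as differential operators on this polynomial ring. -/
abbrev P14 (M N : ℕ) : Type := MvPolynomial (Option (Fin M × Fin N)) ℂ

noncomputable def xop14 (M N : ℕ) (a : Fin M) (i : Fin N) : Module.End ℂ (P14 M N) :=
  LinearMap.mulLeft ℂ (MvPolynomial.X (some (a, i)))

noncomputable def dop14 (M N : ℕ) (a : Fin M) (i : Fin N) : Module.End ℂ (P14 M N) :=
  (MvPolynomial.pderiv (R := ℂ) (some (a, i))).toLinearMap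

noncomputable def zop14 (M N : ℕ) : Module.End ℂ (P14 M N) :=
  LinearMap.mulLeft ℂ (MvPolynomial.X none)

noncomputable def dzop14 (M N : ℕ) : Module.End ℂ (P14 M N) :=
  (MvPolynomial.pderiv (R := ℂ) (none : Option (Fin M × Fin N))).toLinearMap

/-!
The entries of the first block column, `∂_z - λ_a` and `∂^a_i`, are constant-coefficient
differential operators, and those of the second block column, `x^a_i` and `z - z_i`, are
multiplication operators; within each group everything commutes. Shifting by scalars does not
change commutators, so the only nonzero commutators between the two groups are
`[∂_z - λ_a, z - z_i] = 1 = [∂^a_i, x^a_i]`, and these are exactly the two sides of the cross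
condition for the `2 × 2` submatrix in rows `a`, `i` and columns `a`, `i`.
-/

open Matrix MvPolynomial

attribute [local instance] LieRing.ofAssociativeRing

section Manin

variable {A : Type*} [Ring A]

theorem lie_sub_algebraMap {R : Type*} [CommSemiring R] [Algebra R A] (a b : A) (r s : R) :
    ⁅a - algebraMap R A r, b - algebraMap R A s⁆ = ⁅a, b⁆ := by
  have central_left (t : R) (x : A) : ⁅algebraMap R A t, x⁆ = 0 :=
    commute_iff_lie_eq.1 (Algebra.commute_algebraMap_left t x)
  have central_right (t : R) (x : A) : ⁅x, algebraMap R A t⁆ = 0 :=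
    commute_iff_lie_eq.1 (Algebra.commute_algebraMap_right t x)
  simp only [sub_lie, lie_sub, central_left, central_right, sub_zero]

theorem Commute.sub_algebraMap {R : Type*} [CommSemiring R] [Algebra R A] {a b : A}
    (h : Commute a b) (r s : R) : Commute (a - algebraMap R A r) (b - algebraMap R A s) := by
  rw [commute_iff_lie_eq, lie_sub_algebraMap, ← commute_iff_lie_eq]
  exact h

theorem isManin_of_commute_of_lie_eq {m n₁ n₂ : Type*} (M : Matrix m (n₁ ⊕ n₂) A)
    (hl : ∀ i k c d, Commute (M i (.inl c)) (M k (.inl d)))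
    (hr : ∀ i k c d, Commute (M i (.inr c)) (M k (.inr d)))
    (hlr : ∀ i k c d, ⁅M i (.inl c), M k (.inr d)⁆ = ⁅M k (.inl c), M i (.inr d)⁆) :
    IsManin M := by
  refine ⟨fun i k j => ?_, fun i k j l => ?_⟩
  · cases j with
    | inl c => exact hl i k c c
    | inr c => exact hr i k c c
  simp only [← Ring.lie_def]
  rcases j with c | c <;> rcases l with d | d
  · rw [commute_iff_lie_eq.1 (hl i k c d), commute_iff_lie_eq.1 (hl k i c d)]
  · exact hlr i k c d
  · rw [← lie_skew, hlr k i d c, lie_skew]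
  · rw [commute_iff_lie_eq.1 (hr i k c d), commute_iff_lie_eq.1 (hr k i c d)]

variable {m n : Type*} [DecidableEq m] [DecidableEq n]

theorem isManin_fromBlocks_diagonal (d : m → A) (X : m → n → A) (Y : n → m → A) (e : n → A)
    (hd : ∀ a b, Commute (d a) (d b)) (hdY : ∀ a i b, Commute (d a) (Y i b))
    (hY : ∀ i a j b, Commute (Y i a) (Y j b)) (hX : ∀ a i b j, Commute (X a i) (X b j))
    (hXe : ∀ a i j, Commute (X a i) (e j)) (he : ∀ i j, Commute (e i) (e j))
    (hdX : ∀ a b j, Commute (d a) (X b j)) (hYe : ∀ i a j, Commute (Y i a) (e j))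
    (hYX : ∀ i a b j, ⁅Y i a, X b j⁆ = if b = a ∧ j = i then ⁅d a, e i⁆ else 0) :
    IsManin (fromBlocks (diagonal d) (of X) (of Y) (diagonal e)) := by
  apply isManin_of_commute_of_lie_eq
  · rintro (a | i) (b | j) c c' <;>
      simp only [fromBlocks_apply₁₁, fromBlocks_apply₂₁, diagonal_apply, of_apply] <;>
      (try split_ifs) <;> simp [*, (hdY _ _ _).symm]
  · rintro (a | i) (b | j) c c' <;>
      simp only [fromBlocks_apply₁₂, fromBlocks_apply₂₂, diagonal_apply, of_apply] <;>
      (try split_ifs) <;> simp [*, (hXe _ _ _).symm]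
  · have hdX' a b j : ⁅d a, X b j⁆ = 0 := commute_iff_lie_eq.1 (hdX a b j)
    have hYe' i a j : ⁅Y i a, e j⁆ = 0 := commute_iff_lie_eq.1 (hYe i a j)
    rintro (a | i) (b | j) c l <;>
      simp only [fromBlocks_apply₁₁, fromBlocks_apply₁₂, fromBlocks_apply₂₁, fromBlocks_apply₂₂,
        diagonal_apply, of_apply, hYX]
    all_goals split_ifs <;> simp_all

end Manin

section Weyl

variable {R : Type*} [CommRing R]

theorem Derivation.lie_mulLeft {A : Type*} [CommRing A] [Algebra R A] (D : Derivation R A A)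
    (a : A) : ⁅D.toLinearMap, LinearMap.mulLeft R a⁆ = LinearMap.mulLeft R (D a) := by
  ext b
  simp only [Ring.lie_def, LinearMap.sub_apply, Module.End.mul_apply, LinearMap.mulLeft_apply,
    Derivation.coeFn_coe, Derivation.leibniz, smul_eq_mul, add_sub_cancel_left]
  exact mul_comm b (D a)

theorem LinearMap.commute_mulLeft {A : Type*} [CommRing A] [Algebra R A] (a b : A) :
    Commute (LinearMap.mulLeft R a) (LinearMap.mulLeft R b) := by
  ext c
  exact mul_left_comm a b c

namespace MvPolynomial

variable {σ : Type*}

theorem lie_pderiv_pderiv (u v : σ) : ⁅pderiv (R := R) u, pderiv (R := R) v⁆ = 0 := by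
  classical
  exact derivation_ext fun i => by simp [Derivation.commutator_apply, Pi.single_apply, apply_ite]

theorem commute_pderiv_pderiv (u v : σ) :
    Commute (pderiv (R := R) u).toLinearMap (pderiv v).toLinearMap := by
  rw [commute_iff_lie_eq, ← Derivation.commutator_coe_linear_map, lie_pderiv_pderiv]
  rfl

theorem lie_pderiv_mulLeft_X [DecidableEq σ] (u v : σ) :
    ⁅(pderiv (R := R) u).toLinearMap, LinearMap.mulLeft R (X v : MvPolynomial σ R)⁆ =
      if v = u then 1 else 0 := by
  rw [Derivation.lie_mulLeft, pderiv_X, Pi.single_apply]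
  split_ifs <;> simp [Module.End.one_eq_id]

theorem commute_pderiv_mulLeft_X {u v : σ} (h : v ≠ u) :
    Commute (pderiv u).toLinearMap (LinearMap.mulLeft R (X v : MvPolynomial σ R)) := by
  classical
  rw [commute_iff_lie_eq, lie_pderiv_mulLeft_X, if_neg h]

end MvPolynomial

end Weyl

theorem stmt14_general (M N : ℕ) (zi : Fin N → ℂ) (la : Fin M → ℂ) :
    IsManin (Matrix.fromBlocks
      (Matrix.diagonal fun a : Fin M =>
        dzop14 M N - algebraMap ℂ (Module.End ℂ (P14 M N)) (la a))
      (Matrix.of fun (a : Fin M) (i : Fin N) => xop14 M N a i)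
      (Matrix.of fun (i : Fin N) (a : Fin M) => dop14 M N a i)
      (Matrix.diagonal fun i : Fin N =>
        zop14 M N - algebraMap ℂ (Module.End ℂ (P14 M N)) (zi i))) := by
  have central_left := Algebra.commute_algebraMap_left (R := ℂ) (A := Module.End ℂ (P14 M N))
  have central_right := Algebra.commute_algebraMap_right (R := ℂ) (A := Module.End ℂ (P14 M N))
  refine isManin_fromBlocks_diagonal _ _ _ _
    (fun _ _ => (commute_pderiv_pderiv _ _).sub_algebraMap _ _)
    (fun _ _ _ => (commute_pderiv_pderiv _ _).sub_left (central_left _ _))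
    (fun i a j b => commute_pderiv_pderiv (some (a, i)) (some (b, j)))
    (fun _ _ _ _ => LinearMap.commute_mulLeft _ _)
    (fun _ _ _ => (LinearMap.commute_mulLeft _ _).sub_right (central_right _ _))
    (fun _ _ => (LinearMap.commute_mulLeft _ _).sub_algebraMap _ _)
    (fun _ _ _ => (commute_pderiv_mulLeft_X (Option.some_ne_none _)).sub_left (central_left _ _))
    (fun i a _ => (commute_pderiv_mulLeft_X (R := ℂ) (u := some (a, i))
      (Option.some_ne_none _).symm).sub_right (central_right _ _))
    (fun i a b j => ?_)
  rw [lie_sub_algebraMap]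
  simp [dop14, xop14, dzop14, zop14, lie_pderiv_mulLeft_X]

/-- The block matrix `𝓜 = (diag(∂_z - λ_a) X; ᵗD diag(z - z_i))` with entries in
`𝒰[z, ∂_z]` is a Manin matrix. -/
theorem stmt14 (M N : ℕ) (zi : Fin N → ℂ) (la : Fin M → ℂ)
    (hz : Function.Injective zi) (hl : Function.Injective la) :
    IsManin (Matrix.fromBlocks
      (Matrix.diagonal fun a : Fin M =>
        dzop14 M N - algebraMap ℂ (Module.End ℂ (P14 M N)) (la a))
      (Matrix.of fun (a : Fin M) (i : Fin N) => xop14 M N a i)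
      (Matrix.of fun (i : Fin N) (a : Fin M) => dop14 M N a i)
      (Matrix.diagonal fun i : Fin N =>
        zop14 M N - algebraMap ℂ (Module.End ℂ (P14 M N)) (zi i))) :=
  stmt14_general M N zi la
end
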